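/- arXiv:2005.10188 — 6 statements merged into one kernel-verified Lean document; each statement's English description precedes it below -/
import Mathlib

section
/- There do not exist x, y, z ∈ O, not all divisible by 2, such that x² + y² + z² ≡ 0 (mod 8O). -/
open scoped Classical
open NumberField Filter

noncomputable section

namespace SpinPaper

variable (K : Type) [Field K] [NumberField K]

/-- An element of the ring of integers is totally positive if it is positive
under every real embedding of `K`. -/
def TotPos (α : 𝓞 K) : Prop := ∀ φ : K →+* ℝ, 0 < φ (α : K)

/-- The quadratic residue symbol `(α / q)` in `K`: `1` if `α` is a nonzero square in
the residue ring `𝓞 K ⧸ q`, `-1` if it is a nonsquare, `0` if `α ∈ q`. -/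
def quadSym (α : 𝓞 K) (q : Ideal (𝓞 K)) : ℤ :=
  if Ideal.Quotient.mk q α = 0 then 0
  else @ite ℤ (∃ β : 𝓞 K ⧸ q, β ^ 2 = Ideal.Quotient.mk q α) (Classical.propDecidable _) 1 (-1)

/-- Restriction of an automorphism of `K` to the ring of integers. -/
def galMap (σ : K ≃ₐ[ℚ] K) : 𝓞 K ≃ₐ[ℤ] 𝓞 K := galRestrict ℤ ℚ K (𝓞 K) σ

/-- Image of an ideal under an automorphism of `K`. -/
def idealMap (σ : K ≃ₐ[ℚ] K) (I : Ideal (𝓞 K)) : Ideal (𝓞 K) :=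
  Ideal.map (galMap K σ) I

/-- The spin `spin(𝔭, σ) = (α / σ(𝔭))` where `α` is a totally positive generator of
`𝔭 ^ h`, `h` the class number of `K`. (Under the standing hypotheses such a generator
exists and the value is independent of its choice.) -/
def spinVal (𝔭 : Ideal (𝓞 K)) (σ : K ≃ₐ[ℚ] K) : ℤ :=
  if hgen : ∃ α : 𝓞 K, TotPos K α ∧ Ideal.span {α} = 𝔭 ^ (classNumber K) then
    quadSym K hgen.choose (idealMap K σ 𝔭)
  else 0

/-- A rational prime `p` splits completely in `K / ℚ`: every prime of `𝓞 K` above `p`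
has ramification index and residue field degree one. -/
def SplitsCompletely (p : ℕ) : Prop :=
  ∀ P : Ideal (𝓞 K), P.IsPrime → (p : 𝓞 K) ∈ P →
    Ideal.ramificationIdx' (Ideal.span {(p : ℤ)}) P = 1 ∧
    Ideal.inertiaDeg' (Ideal.span {(p : ℤ)}) P = 1

/-- The set `S` of odd rational primes splitting completely in `K/ℚ`. -/
def Sset : Set ℕ := {p | p.Prime ∧ p ≠ 2 ∧ SplitsCompletely K p}

def SsetPlus : Set ℕ := {p | p ∈ Sset K ∧ p % 4 = 1}

def SsetMinus : Set ℕ := {p | p ∈ Sset K ∧ p % 4 = 3}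

/-- The set `F`: primes of `S` all of whose primes above have spin `1` with respect to
every nontrivial automorphism. -/
def Fset : Set ℕ :=
  {p | p ∈ Sset K ∧ ∀ 𝔭 : Ideal (𝓞 K), 𝔭.IsPrime → (p : 𝓞 K) ∈ 𝔭 →
    ∀ σ : K ≃ₐ[ℚ] K, σ ≠ 1 → spinVal K 𝔭 σ = 1}

def FsetPlus : Set ℕ := {p | p ∈ Fset K ∧ p % 4 = 1}

def FsetMinus : Set ℕ := {p | p ∈ Fset K ∧ p % 4 = 3}

/-- The set `R`: primes of `S` for which `spin(𝔭,σ)·spin(𝔭,σ⁻¹) = 1` for all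
nontrivial `σ` and all `𝔭` above `p`. -/
def Rset : Set ℕ :=
  {p | p ∈ Sset K ∧ ∀ 𝔭 : Ideal (𝓞 K), 𝔭.IsPrime → (p : 𝓞 K) ∈ 𝔭 →
    ∀ σ : K ≃ₐ[ℚ] K, σ ≠ 1 → spinVal K 𝔭 σ * spinVal K 𝔭 σ⁻¹ = 1}

def RsetPlus : Set ℕ := {p | p ∈ Rset K ∧ p % 4 = 1}

def RsetMinus : Set ℕ := {p | p ∈ Rset K ∧ p % 4 = 3}

/-- The number of elements of `A` that are at most `N`. -/
def pCount (A : Set ℕ) (N : ℕ) : ℕ := Nat.card {p : ℕ // p ∈ A ∧ p ≤ N}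

/-- `A` has restricted density `d` inside `B` (for sets of rational primes). -/
def HasRelDensity (A B : Set ℕ) (d : ℝ) : Prop :=
  Tendsto (fun N : ℕ => (pCount A N : ℝ) / (pCount B N : ℝ)) atTop (nhds d)

/-- `A` has natural density `d` as a set of rational primes. -/
def HasNatDensity (A : Set ℕ) (d : ℝ) : Prop :=
  HasRelDensity A {p | p.Prime} d

/-- Conjecture `C_η` on short character sums, with a specified constant `δ`. -/
def ConjCWith (η δ : ℝ) : Prop :=
  ∀ ε : ℝ, 0 < ε → ∃ C : ℝ, 0 < C ∧
    ∀ Q : ℕ, 3 ≤ Q → ∀ q : ℕ, q ≤ Q → ∀ χ : DirichletCharacter ℝ q,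
      χ ≠ 1 → χ.IsPrimitive →
      ∀ N : ℤ, (N : ℝ) ≤ (Q : ℝ) ^ η → ∀ M : ℤ,
        |∑ a ∈ Finset.Ioc M (M + N), χ (a : ZMod q)| ≤ C * (Q : ℝ) ^ (η * (1 - δ) + ε)

/-- Conjecture `C_η` on short character sums. -/
def ConjC (η : ℝ) : Prop := ∃ δ : ℝ, 0 < δ ∧ ConjCWith η δ

/-- `d_k`: the multiplicative order of `2` modulo `k`. -/
def dk (k : ℕ) : ℕ := orderOf (2 : ZMod k)

def sPlus (n : ℕ) : ℕ :=
  1 + (∏ k ∈ n.divisors.filter (fun k => k ≠ 1 ∧ Odd (dk k)),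
        2 ^ (Nat.totient k / (2 * dk k))) *
      ((∏ k ∈ n.divisors.filter (fun k => k ≠ 1 ∧ Odd (dk k)),
        2 ^ (Nat.totient k / 2)) - 1)

def sMinus (n : ℕ) : ℕ :=
  (∏ k ∈ n.divisors.filter (fun k => k ≠ 1 ∧ Even (dk k)),
      (2 ^ (dk k / 2) + 1) ^ (Nat.totient k / dk k)) *
  (∏ k ∈ n.divisors.filter (fun k => k ≠ 1 ∧ Odd (dk k)),
      (2 ^ (dk k) - 1) ^ (Nat.totient k / (2 * dk k)))

/-- The ideal `4 𝓞 K`. -/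
abbrev I4 : Ideal (𝓞 K) := Ideal.span {(4 : 𝓞 K)}

/-- The unit group `(𝓞 K / 4)ˣ`. -/
abbrev U4 := (𝓞 K ⧸ I4 K)ˣ

/-- The subgroup of squares of `(𝓞 K / 4)ˣ`. -/
def sqSub : Subgroup (U4 K) := MonoidHom.range (powMonoidHom 2 : U4 K →* U4 K)

/-- `M₄ = (𝓞 K / 4)ˣ / ((𝓞 K / 4)ˣ)²`. -/
abbrev M4 := U4 K ⧸ sqSub K

/-- `α ∈ 𝓞 K` (necessarily coprime to `2`) represents the class `c ∈ M₄`. -/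
def Represents (α : 𝓞 K) (c : M4 K) : Prop :=
  ∃ u : U4 K, (u : 𝓞 K ⧸ I4 K) = Ideal.Quotient.mk (I4 K) α ∧ QuotientGroup.mk u = c

/-- The relation `r₄(𝔭) = c`: every totally positive generator of `𝔭 ^ h`
represents `c` in `M₄`. -/
def r4Rel (𝔭 : Ideal (𝓞 K)) (c : M4 K) : Prop :=
  ∀ α : 𝓞 K, TotPos K α → Ideal.span {α} = 𝔭 ^ (classNumber K) → Represents K α c

/-- The Hilbert-symbol solvability condition `H(α, β)`:
`α x² + β y² ≡ z² (mod 8 𝓞 K)` has a solution with not all of `x, y, z` divisible by 2. -/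
def Hsym (α β : 𝓞 K) : Prop :=
  ∃ x y z : 𝓞 K, ¬((2 : 𝓞 K) ∣ x ∧ (2 : 𝓞 K) ∣ y ∧ (2 : 𝓞 K) ∣ z) ∧
    (8 : 𝓞 K) ∣ (α * x ^ 2 + β * y ^ 2 - z ^ 2)

/-- Induced action of `σ ∈ Gal(K/ℚ)` on `M₄`, as a relation: `σ` maps the class `c`
to the class `c'`. -/
def ActRel (σ : K ≃ₐ[ℚ] K) (c c' : M4 K) : Prop :=
  ∀ α : 𝓞 K, Represents K α c → Represents K (galMap K σ α) c'

/-- The norm condition `N(c) = v` in `ℤ/4ℤ`, for a class `c ∈ M₄`: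
every representative of `c` has norm congruent to `v` mod `4`. -/
def NormRel (c : M4 K) (v : ZMod 4) : Prop :=
  ∀ α : 𝓞 K, Represents K α c → ((Algebra.norm ℤ α : ℤ) : ZMod 4) = v

/-- The number of ideals in `A` of absolute norm at most `N`. -/
def iCount (A : Set (Ideal (𝓞 K))) (N : ℕ) : ℕ :=
  Nat.card {P : Ideal (𝓞 K) // P ∈ A ∧ Ideal.absNorm P ≤ N}

/-- `A` has restricted density `d` inside `B` (for sets of ideals, ordered by norm). -/
def HasRelDensityI (A B : Set (Ideal (𝓞 K))) (d : ℝ) : Prop :=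
  Tendsto (fun N : ℕ => (iCount K A N : ℝ) / (iCount K B N : ℝ)) atTop (nhds d)

/-- `S'_μ`: the set of prime ideals of `𝓞 K` lying above a rational prime `p ≡ m (mod 4)`
that splits completely in `K/ℚ`. -/
def SidealMod (m : ℕ) : Set (Ideal (𝓞 K)) :=
  {P | P.IsPrime ∧ ∃ p : ℕ, p.Prime ∧ (p : 𝓞 K) ∈ P ∧ SplitsCompletely K p ∧ p % 4 = m}

end SpinPaper

open SpinPaper

/-!
Reducing modulo the prime `2`, a primitive solution forces `z ≡ x + y` and then
`x² + xy + y² ≡ 0` in the residue field `𝓞 K ⧸ 2`, which has `2 ^ n` elements. Since `n` is odd,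
`3 ∤ 2 ^ n - 1`, so this field contains no primitive cube root of unity and the form
`x² + xy + y²` is anisotropic over it; hence `x`, `y` and then `z` are all divisible by `2`.
-/

lemma Nat.coprime_three_two_pow_sub_one {n : ℕ} (hn : Odd n) : Nat.Coprime 3 (2 ^ n - 1) := by
  obtain ⟨k, rfl⟩ := hn
  have h4 : 4 ^ k % 3 = 1 := by simp [Nat.pow_mod]
  have hpos : 0 < 4 ^ k := by positivity
  rw [Nat.Prime.coprime_iff_not_dvd Nat.prime_three, pow_succ, pow_mul]
  norm_num
  omega

namespace FiniteField

variable {F : Type*} [Field F] [Finite F]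

lemma eq_one_of_pow_three_eq_one (h3 : Nat.Coprime 3 (Nat.card F - 1)) {c : F}
    (hc : c ^ 3 = 1) : c = 1 := by
  have := Fintype.ofFinite F
  have hc0 : c ≠ 0 := by rintro rfl; simp at hc
  rw [Nat.card_eq_fintype_card] at h3
  exact (pow_eq_one_iff_of_coprime h3).mp ⟨hc, pow_card_sub_one_eq_one c hc0⟩

lemma eq_zero_of_sq_add_mul_add_sq_eq_zero (h3 : Nat.Coprime 3 (Nat.card F - 1))
    (hchar : (3 : F) ≠ 0) {a b : F} (h : a ^ 2 + a * b + b ^ 2 = 0) : a = 0 ∧ b = 0 := by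
  suffices ha : a = 0 by
    subst ha
    exact ⟨rfl, pow_eq_zero_iff two_ne_zero |>.mp (by simpa using h)⟩
  by_contra ha
  have hcube : (b / a) ^ 3 = 1 := by
    rw [div_pow, div_eq_one_iff_eq (pow_ne_zero 3 ha)]
    linear_combination (b - a) * h
  have hba : b = a := (div_eq_one_iff_eq ha).mp (eq_one_of_pow_three_eq_one h3 hcube)
  subst hba
  exact ha (pow_eq_zero_iff two_ne_zero |>.mp
    ((mul_eq_zero.mp (by linear_combination h : (3 : F) * b ^ 2 = 0)).resolve_left hchar))

end FiniteField

namespace NumberField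

variable {K : Type*} [Field K] [NumberField K]

lemma card_quotient_span_natCast (p : ℕ) :
    Nat.card (𝓞 K ⧸ Ideal.span {(p : 𝓞 K)}) = p ^ Module.finrank ℚ K := by
  rw [← Submodule.cardQuot_apply, ← Ideal.absNorm_apply, Ideal.absNorm_span_natCast,
    RingOfIntegers.rank]

lemma two_dvd_of_two_dvd_sq_add_mul_add_sq (hodd : Odd (Module.finrank ℚ K))
    (h2 : Prime (2 : 𝓞 K)) {x y : 𝓞 K} (h : 2 ∣ x ^ 2 + x * y + y ^ 2) : 2 ∣ x ∧ 2 ∣ y := by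
  set I : Ideal (𝓞 K) := Ideal.span {((2 : ℕ) : 𝓞 K)}
  have hmem : ∀ a : 𝓞 K, Ideal.Quotient.mk I a = 0 ↔ 2 ∣ a := fun a => by
    rw [Ideal.Quotient.eq_zero_iff_mem, Ideal.mem_span_singleton, Nat.cast_ofNat]
  have hI : I.IsMaximal :=
    ((Ideal.span_singleton_prime (by exact_mod_cast h2.ne_zero)).mpr
      (by exact_mod_cast h2)).isMaximal (by simp)
  let := Ideal.Quotient.field I
  have hcard := card_quotient_span_natCast (K := K) 2
  have := Nat.finite_of_card_ne_zero (hcard.trans_ne (by positivity))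
  have h3 : (3 : 𝓞 K ⧸ I) ≠ 0 := by
    rw [← map_ofNat (Ideal.Quotient.mk I) 3, Ne, hmem, show (3 : 𝓞 K) = 2 + 1 by norm_num,
      dvd_add_right (dvd_refl 2)]
    exact h2.not_dvd_one
  have key := FiniteField.eq_zero_of_sq_add_mul_add_sq_eq_zero
    (hcard ▸ Nat.coprime_three_two_pow_sub_one hodd) h3
    (a := Ideal.Quotient.mk I x) (b := Ideal.Quotient.mk I y)
    (by simpa only [map_add, map_mul, map_pow] using (hmem _).mpr h)
  exact ⟨(hmem x).mp key.1, (hmem y).mp key.2⟩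

end NumberField

/-- The identity behind the first step is
`x² + y² + (x + y + 2w)² = 2 (x² + xy + y²) + 4 (w (x + y) + w²)`. -/
lemma two_dvd_of_four_dvd_sum_sq {R : Type*} [CommRing R] [IsDomain R] (h2 : Prime (2 : R))
    (hform : ∀ x y : R, 2 ∣ x ^ 2 + x * y + y ^ 2 → 2 ∣ x ∧ 2 ∣ y)
    {x y z : R} (h : 4 ∣ x ^ 2 + y ^ 2 + z ^ 2) : 2 ∣ x ∧ 2 ∣ y ∧ 2 ∣ z := by
  obtain ⟨c, hc⟩ := h
  obtain ⟨w, hw⟩ : 2 ∣ z - x - y := by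
    obtain ⟨t, ht⟩ := h2.dvd_of_dvd_pow (n := 2) (a := x + y + z)
      ⟨x * y + y * z + z * x + 2 * c, by linear_combination hc⟩
    exact ⟨t - x - y, by linear_combination ht⟩
  have hform_eq : x ^ 2 + x * y + y ^ 2 = 2 * (c - w * x - w * y - w ^ 2) :=
    mul_left_cancel₀ h2.ne_zero (by linear_combination hc - (z + x + y + 2 * w) * hw)
  obtain ⟨⟨u, rfl⟩, ⟨v, rfl⟩⟩ := hform x y ⟨_, hform_eq⟩
  exact ⟨dvd_mul_right 2 u, dvd_mul_right 2 v, ⟨u + v + w, by linear_combination hw⟩⟩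

theorem no_primitive_sum_of_three_squares_general
    (K : Type) [Field K] [NumberField K]
    (n : ℕ) (hn : Module.finrank ℚ K = n)
    (hnodd : Odd n)
    (hinert : Prime (2 : 𝓞 K)) :
    ¬ ∃ x y z : 𝓞 K, ¬((2 : 𝓞 K) ∣ x ∧ (2 : 𝓞 K) ∣ y ∧ (2 : 𝓞 K) ∣ z) ∧
      (8 : 𝓞 K) ∣ (x ^ 2 + y ^ 2 + z ^ 2) := by
  rintro ⟨x, y, z, hprim, hdiv⟩
  exact hprim <| two_dvd_of_four_dvd_sum_sq hinert
    (fun _ _ => NumberField.two_dvd_of_two_dvd_sq_add_mul_add_sq (hn ▸ hnodd) hinert)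
    (dvd_trans ⟨2, by norm_num⟩ hdiv)

/-- `(-1,-1)₂ = -1`: there is no primitive solution of `x² + y² + z² ≡ 0 (mod 8 𝓞 K)`. -/
theorem no_primitive_sum_of_three_squares
    (K : Type) [Field K] [NumberField K] [IsGalois ℚ K]
    (n : ℕ) (hn : Module.finrank ℚ K = n)
    (hcyc : IsCyclic (K ≃ₐ[ℚ] K))
    (hnodd : Odd n)
    (hinert : Prime (2 : 𝓞 K)) :
    ¬ ∃ x y z : 𝓞 K, ¬((2 : 𝓞 K) ∣ x ∧ (2 : 𝓞 K) ∣ y ∧ (2 : 𝓞 K) ∣ z) ∧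
      (8 : 𝓞 K) ∣ (x ^ 2 + y ^ 2 + z ^ 2) :=
  no_primitive_sum_of_three_squares_general K n hn hnodd hinert
end
end

section
/- Let α, β, B ∈ O all be coprime to 2. If there exist x, y, z ∈ O, not all divisible by 2, with x² − α·y² ≡ β·z² (mod 8O), then there exist X, Y, Z ∈ O, not all divisible by 2, with X² − (α + 4B)·Y² ≡ β·Z² (mod 8O). -/
open scoped Classical
open NumberField Filter

noncomputable section

open SpinPaper

/-! If `2 ∣ y`, the given solution already works, since `8 ∣ 4 B y²`. Otherwise we look for a
solution `(x + 2s, y, z + 2t)`, which reduces to solving `s² + s x + β (t² + t z) = B y²` in the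
residue field `F = 𝓞 K ⧸ 2`, a finite field of characteristic `2` in which `x² ≠ β z²` (their
difference is the unit `α y²`). For `x z ≠ 0` put `s = x a`, `t = z b`: the left side becomes
`x² ℘ a + β z² ℘ b`, where `℘ a = a² + a` is additive with kernel `{0, 1}`, so its image `P` has
index `2`. The only scalars mapping `P` into itself are `0` and `1`, hence `x² P ≠ β z² P`, and two
distinct subgroups of index `2` add up to all of `F`. -/
section ArtinSchreier

variable (F : Type*) [CommRing F] [CharP F 2]

def artinSchreier : F →+ F := (frobenius F 2).toAddMonoidHom + AddMonoidHom.id F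

variable {F}

@[simp]
lemma artinSchreier_apply (a : F) : artinSchreier F a = a ^ 2 + a := rfl

lemma mem_ker_artinSchreier [IsDomain F] {a : F} :
    a ∈ (artinSchreier F).ker ↔ a = 0 ∨ a = 1 := by
  rw [AddMonoidHom.mem_ker, artinSchreier_apply, CharTwo.add_eq_zero, sq]
  exact IsIdempotentElem.iff_eq_zero_or_one

lemma index_range_artinSchreier [IsDomain F] [Finite F] : (artinSchreier F).range.index = 2 := by
  rw [AddSubgroup.index_range, ← Set.ncard_pair (zero_ne_one' F), ← Nat.card_coe_set_eq]
  congr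
  ext a
  exact mem_ker_artinSchreier

end ArtinSchreier

section IndexTwo

variable {F : Type*} [Field F] [Finite F] {P : AddSubgroup F}

lemma mul_mem_iff_of_forall_mul_mem {a : F} (ha : a ≠ 0) (haP : ∀ p ∈ P, a * p ∈ P) (e : F) :
    a * e ∈ P ↔ e ∈ P := by
  refine ⟨fun hae ↦ ?_, haP e⟩
  have hsurj : Function.Surjective (fun p : P ↦ (⟨a * p, haP p p.2⟩ : P)) :=
    Finite.surjective_of_injective fun p q hpq ↦
      Subtype.ext (mul_left_cancel₀ ha (congrArg Subtype.val hpq))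
  obtain ⟨p, hp⟩ := hsurj ⟨a * e, hae⟩
  rw [← mul_left_cancel₀ ha (congrArg Subtype.val hp)]
  exact p.2

lemma eq_zero_or_eq_one_of_forall_mul_mem (hP : P.index = 2) {v : F}
    (hvP : ∀ p ∈ P, v * p ∈ P) : v = 0 ∨ v = 1 := by
  by_contra! hv
  obtain ⟨e, he⟩ : ∃ e, e ∉ P := by
    by_contra! h
    rw [(AddSubgroup.eq_top_iff' P).mpr h, AddSubgroup.index_top] at hP
    omega
  have hv1P : ∀ p ∈ P, (v - 1) * p ∈ P := fun p hp ↦ by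
    rw [sub_one_mul]
    exact sub_mem (hvP p hp) hp
  have hve := (mul_mem_iff_of_forall_mul_mem hv.1 hvP e).not.mpr he
  have hv1e := (mul_mem_iff_of_forall_mul_mem (sub_ne_zero.mpr hv.2) hv1P e).not.mpr he
  -- `v e = (v - 1) e + e` is a sum of two elements outside `P`, hence lies in `P`
  have hsum := AddSubgroup.add_mem_iff_of_index_two hP (a := (v - 1) * e) (b := e)
  rw [← add_one_mul, sub_add_cancel] at hsum
  tauto

end IndexTwo

section ResidueField

variable {F : Type*} [Field F] [Finite F] [CharP F 2]

lemma exists_mul_artinSchreier_add_mul_artinSchreier_eq {u w : F} (hu : u ≠ 0) (hw : w ≠ 0)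
    (huw : u ≠ w) (c : F) : ∃ a b, u * artinSchreier F a + w * artinSchreier F b = c := by
  set P := (artinSchreier F).range
  have hP : P.index = 2 := index_range_artinSchreier
  by_cases hc : u⁻¹ * c ∈ P
  · obtain ⟨a, ha⟩ := hc
    exact ⟨a, 0, by rw [ha, map_zero, mul_zero, add_zero, mul_inv_cancel_left₀ hu]⟩
  obtain ⟨_, ⟨b, rfl⟩, hb⟩ : ∃ p ∈ P, u⁻¹ * w * p ∉ P := by
    by_contra! h
    rcases eq_zero_or_eq_one_of_forall_mul_mem hP h with h0 | h1
    · exact mul_ne_zero (inv_ne_zero hu) hw h0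
    · exact huw (inv_mul_eq_one₀ hu |>.mp h1)
  obtain ⟨a, ha⟩ : u⁻¹ * c + u⁻¹ * w * artinSchreier F b ∈ P :=
    (AddSubgroup.add_mem_iff_of_index_two hP).mpr (iff_of_false hc hb)
  refine ⟨a, b, ?_⟩
  rw [ha, mul_add, mul_inv_cancel_left₀ hu, ← mul_assoc, mul_inv_cancel_left₀ hu,
    add_assoc, CharTwo.add_self_eq_zero, add_zero]

lemma exists_sq_add_mul_add_mul_sq_add_mul_eq {x z β : F} (hβ : β ≠ 0)
    (hxz : x ^ 2 ≠ β * z ^ 2) (c : F) : ∃ s t, s ^ 2 + s * x + β * (t ^ 2 + t * z) = c := by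
  have hsq : ∀ a : F, IsSquare a := FiniteField.isSquare_of_char_two (ringChar.eq F 2)
  by_cases hz : z = 0
  · obtain ⟨t, ht⟩ := hsq (β⁻¹ * c)
    exact ⟨0, t, by rw [hz, ← mul_inv_cancel_left₀ hβ c, ht]; ring⟩
  by_cases hx : x = 0
  · obtain ⟨s, hs⟩ := hsq c
    exact ⟨s, 0, by rw [hx, hs]; ring⟩
  obtain ⟨a, b, hab⟩ := exists_mul_artinSchreier_add_mul_artinSchreier_eq (pow_ne_zero 2 hx)
    (mul_ne_zero hβ (pow_ne_zero 2 hz)) hxz c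
  exact ⟨x * a, z * b, by rw [← hab]; simp only [artinSchreier_apply]; ring⟩

end ResidueField

section TwoMaximal

variable {R : Type*} [CommRing R] [(Ideal.span {(2 : R)}).IsMaximal]
  [Finite (R ⧸ Ideal.span {(2 : R)})]

lemma exists_primitive_solution_add_four_mul {α β : R} (hα : ¬ 2 ∣ α) (hβ : ¬ 2 ∣ β) (B : R)
    (hsol : ∃ x y z : R, ¬(2 ∣ x ∧ 2 ∣ y ∧ 2 ∣ z) ∧ 8 ∣ x ^ 2 - α * y ^ 2 - β * z ^ 2) :
    ∃ X Y Z : R, ¬(2 ∣ X ∧ 2 ∣ Y ∧ 2 ∣ Z) ∧ 8 ∣ X ^ 2 - (α + 4 * B) * Y ^ 2 - β * Z ^ 2 := by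
  obtain ⟨x, y, z, hprim, h8⟩ := hsol
  by_cases hy : 2 ∣ y
  · obtain ⟨y', rfl⟩ := hy
    refine ⟨x, 2 * y', z, hprim, ?_⟩
    have hsplit : x ^ 2 - (α + 4 * B) * (2 * y') ^ 2 - β * z ^ 2
        = (x ^ 2 - α * (2 * y') ^ 2 - β * z ^ 2) - 8 * (2 * B * y' ^ 2) := by ring
    rw [hsplit]
    exact dvd_sub h8 (dvd_mul_right 8 _)
  let := Ideal.Quotient.field (Ideal.span {(2 : R)})
  set q := Ideal.Quotient.mk (Ideal.span {(2 : R)})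
  have hq : ∀ w, q w = 0 ↔ 2 ∣ w := Ideal.Quotient.eq_zero_iff_dvd 2
  have hq2 : (2 : R ⧸ Ideal.span {(2 : R)}) = 0 := by
    rw [← map_ofNat q 2, hq]
  have : CharP (R ⧸ Ideal.span {(2 : R)}) 2 :=
    (CharP.charP_iff_prime_eq_zero Nat.prime_two).mpr (by exact_mod_cast hq2)
  have hxz : q x ^ 2 ≠ q β * q z ^ 2 := by
    have h2 : q (x ^ 2 - α * y ^ 2 - β * z ^ 2) = 0 := (hq _).mpr (dvd_trans ⟨4, by norm_num⟩ h8)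
    simp only [map_sub, map_mul, map_pow] at h2
    intro h
    have hαy : q α * q y ^ 2 = 0 := by linear_combination h - h2
    rcases mul_eq_zero.mp hαy with h0 | h0
    · exact hα ((hq α).mp h0)
    · exact hy ((hq y).mp (pow_eq_zero_iff two_ne_zero |>.mp h0))
  obtain ⟨s', t', hst⟩ := exists_sq_add_mul_add_mul_sq_add_mul_eq (mt (hq β).mp hβ) hxz
    (q B * q y ^ 2)
  obtain ⟨s, rfl⟩ := Ideal.Quotient.mk_surjective s'
  obtain ⟨t, rfl⟩ := Ideal.Quotient.mk_surjective t'
  refine ⟨x + 2 * s, y, z + 2 * t, fun h ↦ hy h.2.1, ?_⟩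
  have hdiff : 2 ∣ s ^ 2 + s * x - B * y ^ 2 - β * (t ^ 2 + t * z) := by
    rw [← hq]
    simp only [map_sub, map_add, map_mul, map_pow]
    linear_combination hst - (q β * (q t ^ 2 + q t * q z)) * hq2
  have hsplit : (x + 2 * s) ^ 2 - (α + 4 * B) * y ^ 2 - β * (z + 2 * t) ^ 2 =
      (x ^ 2 - α * y ^ 2 - β * z ^ 2) + 4 * (s ^ 2 + s * x - B * y ^ 2 - β * (t ^ 2 + t * z)) := by
    ring
  rw [hsplit]
  exact dvd_add h8 ((show (8 : R) = 4 * 2 by norm_num) ▸ mul_dvd_mul_left 4 hdiff)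

end TwoMaximal

theorem hilbert_symbol_well_defined_general
    (K : Type) [Field K] [NumberField K]
    (hinert : Prime (2 : 𝓞 K))
    (α β B : 𝓞 K)
    (hα : ¬ (2 : 𝓞 K) ∣ α) (hβ : ¬ (2 : 𝓞 K) ∣ β)
    (hsol : ∃ x y z : 𝓞 K, ¬((2 : 𝓞 K) ∣ x ∧ (2 : 𝓞 K) ∣ y ∧ (2 : 𝓞 K) ∣ z) ∧
      (8 : 𝓞 K) ∣ (x ^ 2 - α * y ^ 2 - β * z ^ 2)) :
    ∃ X Y Z : 𝓞 K, ¬((2 : 𝓞 K) ∣ X ∧ (2 : 𝓞 K) ∣ Y ∧ (2 : 𝓞 K) ∣ Z) ∧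
      (8 : 𝓞 K) ∣ (X ^ 2 - (α + 4 * B) * Y ^ 2 - β * Z ^ 2) := by
  have : (Ideal.span {(2 : 𝓞 K)}).IsMaximal :=
    ((Ideal.span_singleton_prime hinert.ne_zero).mpr hinert).isMaximal
      (mt Ideal.span_singleton_eq_bot.mp hinert.ne_zero)
  exact exists_primitive_solution_add_four_mul hα hβ B hsol

/-- Well-definedness of the Hilbert symbol at `2` on `M₄`: if
`x² - α y² ≡ β z² (mod 8 𝓞 K)` has a primitive solution, then so does
`X² - (α + 4B) Y² ≡ β Z² (mod 8 𝓞 K)`. -/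
theorem hilbert_symbol_well_defined
    (K : Type) [Field K] [NumberField K]
    (hinert : Prime (2 : 𝓞 K))
    (α β B : 𝓞 K)
    (hα : ¬ (2 : 𝓞 K) ∣ α) (hβ : ¬ (2 : 𝓞 K) ∣ β) (hB : ¬ (2 : 𝓞 K) ∣ B)
    (hsol : ∃ x y z : 𝓞 K, ¬((2 : 𝓞 K) ∣ x ∧ (2 : 𝓞 K) ∣ y ∧ (2 : 𝓞 K) ∣ z) ∧
      (8 : 𝓞 K) ∣ (x ^ 2 - α * y ^ 2 - β * z ^ 2)) :
    ∃ X Y Z : 𝓞 K, ¬((2 : 𝓞 K) ∣ X ∧ (2 : 𝓞 K) ∣ Y ∧ (2 : 𝓞 K) ∣ Z) ∧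
      (8 : 𝓞 K) ∣ (X ^ 2 - (α + 4 * B) * Y ^ 2 - β * Z ^ 2) :=
  hilbert_symbol_well_defined_general K hinert α β B hα hβ hsol
end
end

section
/- Let α ∈ O be coprime to 2 and suppose that for every β ∈ O coprime to 2 there exist x, y, z ∈ O, not all divisible by 2, with x² − α·y² ≡ β·z² (mod 8O). Then the class of α in M₄ is trivial; that is, there exists γ ∈ O coprime to 2 with α ≡ γ² (mod 4O). -/
open scoped Classical
open NumberField Filter

noncomputable section

open SpinPaper

/-! Since squaring is injective modulo the prime `2`, it is bijective on the finite residue field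
`O/2`, so `α = c² + 2m`. If `m` is even, `c` works. Otherwise pick `w` such that the binary form
`m y² - c y z + w z²` has no zero modulo `2` with `z` odd, and test against `β = 1 + 2w`. Any
solution has `x ≡ c y + z (mod 2)`, and then the congruence modulo `8` reduces to
`m y² - c y z + w z² ≡ 0 (mod 2)`; hence `z` is even, primitivity forces `y` odd, and
`x² ≡ α y² (mod 4)` exhibits `α` as a square modulo `4`. -/

open Ideal

theorem exists_forall_mul_sq_sub_mul_mul_add_mul_sq_ne_zero {F : Type*} [Field F] [Finite F]
    {m c : F} (hm : m ≠ 0) (hc : c ≠ 0) :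
    ∃ w : F, ∀ t s : F, s ≠ 0 → m * t ^ 2 - c * t * s + w * s ^ 2 ≠ 0 := by
  -- `g 0 = g (c / m) = 0`, so `g` is not surjective, and the form is `s² (w - g (t / s))`.
  set g : F → F := fun T => c * T - m * T ^ 2
  have hg : ¬ g.Injective := fun hinj => by
    have : c / m = 0 := hinj (by simp only [g]; field_simp; ring)
    simp [hc, hm] at this
  obtain ⟨w, hw⟩ := not_forall.mp (mt Finite.injective_iff_surjective.mpr hg)
  refine ⟨w, fun t s hs h => hw ⟨t / s, ?_⟩⟩
  simp only [g]
  field_simp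
  linear_combination -h

section

variable {R : Type*} [CommRing R]

theorem two_dvd_sub_of_two_dvd_sq_sub_sq (h2 : Prime (2 : R)) {a b : R}
    (h : 2 ∣ a ^ 2 - b ^ 2) : 2 ∣ a - b :=
  h2.dvd_of_dvd_pow (n := 2) <| by
    convert dvd_sub h (dvd_mul_right 2 (b * (a - b))) using 1
    ring

theorem isMaximal_span_singleton_of_prime {p : R} (hp : Prime p) [Finite (R ⧸ span {p})] :
    (span {p}).IsMaximal :=
  have := (span_singleton_prime hp.ne_zero).mpr hp
  Ideal.Quotient.maximal_of_isField _ (Finite.isField_of_domain _)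

theorem exists_eq_sq_add_two_mul (h2 : Prime (2 : R)) [Finite (R ⧸ span {(2 : R)})] (a : R) :
    ∃ c m : R, a = c ^ 2 + 2 * m := by
  have hinj : Function.Injective fun x : R ⧸ span {(2 : R)} => x ^ 2 := by
    intro x y hxy
    obtain ⟨x, rfl⟩ := Ideal.Quotient.mk_surjective x
    obtain ⟨y, rfl⟩ := Ideal.Quotient.mk_surjective y
    rw [Ideal.Quotient.mk_eq_mk_iff_sub_mem, mem_span_singleton]
    apply two_dvd_sub_of_two_dvd_sq_sub_sq h2
    rw [← Ideal.Quotient.eq_zero_iff_dvd, map_sub, map_pow, map_pow]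
    exact sub_eq_zero.mpr hxy
  obtain ⟨c, hc⟩ := Finite.injective_iff_surjective.mp hinj (Ideal.Quotient.mk _ a)
  obtain ⟨c, rfl⟩ := Ideal.Quotient.mk_surjective c
  obtain ⟨m, hm⟩ := (Ideal.Quotient.eq_zero_iff_dvd 2 (a - c ^ 2)).mp <| by
    rw [map_sub, map_pow, ← hc, sub_self]
  exact ⟨c, m, by linear_combination hm⟩

theorem exists_forall_not_two_dvd_mul_sq_sub_mul_mul_add_mul_sq (h2 : Prime (2 : R))
    [Finite (R ⧸ span {(2 : R)})] {m c : R} (hm : ¬ 2 ∣ m) (hc : ¬ 2 ∣ c) :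
    ∃ w : R, ∀ y z : R, ¬ 2 ∣ z → ¬ 2 ∣ m * y ^ 2 - c * y * z + w * z ^ 2 := by
  have := isMaximal_span_singleton_of_prime h2
  let := Ideal.Quotient.field (span {(2 : R)})
  simp only [← Ideal.Quotient.eq_zero_iff_dvd, map_sub, map_add, map_mul, map_pow] at hm hc ⊢
  obtain ⟨w, hw⟩ := exists_forall_mul_sq_sub_mul_mul_add_mul_sq_ne_zero hm hc
  obtain ⟨w, rfl⟩ := Ideal.Quotient.mk_surjective w
  exact ⟨w, fun y z => hw _ _⟩

theorem exists_four_dvd_sub_sq_of_four_dvd_sq_sub_mul_sq (h2 : (span {(2 : R)}).IsMaximal)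
    {a x y : R} (hy : ¬ 2 ∣ y) (h : 4 ∣ x ^ 2 - a * y ^ 2) : ∃ γ, 4 ∣ a - γ ^ 2 := by
  -- An inverse `u` of `y` modulo `2` has `(u y)² ≡ 1 (mod 4)`, so `γ = x u` works.
  obtain ⟨u, _, hi, hu⟩ := h2.exists_inv (mem_span_singleton.not.mpr hy)
  obtain ⟨i, rfl⟩ := mem_span_singleton.mp hi
  obtain ⟨k, hk⟩ := h
  exact ⟨x * u, a * i * (1 - i) - u ^ 2 * k, by
    linear_combination (-u ^ 2) * hk - a * (1 - 2 * i + u * y) * hu⟩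

theorem two_dvd_mul_sq_sub_mul_mul_add_mul_sq [IsDomain R] (h2 : Prime (2 : R))
    {c m w x y z : R}
    (h : 8 ∣ x ^ 2 - (c ^ 2 + 2 * m) * y ^ 2 - (1 + 2 * w) * z ^ 2) :
    2 ∣ m * y ^ 2 - c * y * z + w * z ^ 2 := by
  obtain ⟨v, hv⟩ : 2 ∣ x - (c * y + z) := by
    apply two_dvd_sub_of_two_dvd_sq_sub_sq h2
    convert dvd_add (dvd_trans ⟨4, by norm_num⟩ h)
      (dvd_mul_right 2 (m * y ^ 2 - c * y * z + w * z ^ 2)) using 1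
    ring
  obtain ⟨k, hk⟩ := h
  refine ⟨v * (c * y + z) + v ^ 2 - 2 * k, mul_left_cancel₀ h2.ne_zero ?_⟩
  linear_combination (-1) * hk + (x + c * y + z + 2 * v) * hv

theorem exists_odd_four_dvd_sub_sq_of_forall_exists_primitive_solution [IsDomain R]
    (h2 : Prime (2 : R)) [Finite (R ⧸ span {(2 : R)})] {α : R} (hα : ¬ 2 ∣ α)
    (hall : ∀ β : R, ¬ 2 ∣ β → ∃ x y z : R, ¬(2 ∣ x ∧ 2 ∣ y ∧ 2 ∣ z) ∧
      8 ∣ x ^ 2 - α * y ^ 2 - β * z ^ 2) :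
    ∃ γ : R, ¬ 2 ∣ γ ∧ 4 ∣ α - γ ^ 2 := by
  obtain ⟨c, m, rfl⟩ := exists_eq_sq_add_two_mul h2 α
  have hc : ¬ 2 ∣ c := fun h => hα (dvd_add (dvd_pow h two_ne_zero) (dvd_mul_right 2 m))
  by_cases hm : 2 ∣ m
  · obtain ⟨m, rfl⟩ := hm
    exact ⟨c, hc, m, by ring⟩
  obtain ⟨w, hw⟩ := exists_forall_not_two_dvd_mul_sq_sub_mul_mul_add_mul_sq h2 hm hc
  have hβ : ¬ 2 ∣ 1 + 2 * w := fun h =>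
    h2.not_isUnit (isUnit_of_dvd_one ((dvd_add_left (dvd_mul_right 2 w)).mp h))
  obtain ⟨x, y, z, hprim, h8⟩ := hall (1 + 2 * w) hβ
  have hz : 2 ∣ z := not_not.mp fun hz => hw y z hz (two_dvd_mul_sq_sub_mul_mul_add_mul_sq h2 h8)
  obtain ⟨z, rfl⟩ := hz
  have h4 : 4 ∣ x ^ 2 - (c ^ 2 + 2 * m) * y ^ 2 := by
    convert dvd_add (dvd_trans ⟨2, by norm_num⟩ h8) (dvd_mul_right 4 ((1 + 2 * w) * z ^ 2))
      using 1
    ring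
  have hy : ¬ 2 ∣ y := by
    rintro ⟨y, rfl⟩
    refine hprim ⟨h2.dvd_of_dvd_pow (n := 2) ?_, dvd_mul_right 2 y, dvd_mul_right 2 z⟩
    convert dvd_add (dvd_trans ⟨2, by norm_num⟩ h4)
      (dvd_mul_right 2 (2 * (c ^ 2 + 2 * m) * y ^ 2)) using 1
    ring
  obtain ⟨γ, k, hk⟩ := exists_four_dvd_sub_sq_of_four_dvd_sq_sub_mul_sq
    (isMaximal_span_singleton_of_prime h2) hy h4
  refine ⟨γ, fun ⟨g, hg⟩ => hα ⟨2 * (k + g ^ 2), ?_⟩, k, hk⟩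
  linear_combination hk + (2 * g + γ) * hg

end

/-- Non-degeneracy of the Hilbert symbol at `2` on `M₄`: if `α` pairs trivially with
every `β` coprime to `2`, then `α` is a square modulo `4 𝓞 K`. -/
theorem hilbert_symbol_nondegenerate
    (K : Type) [Field K] [NumberField K]
    (hinert : Prime (2 : 𝓞 K))
    (α : 𝓞 K) (hα : ¬ (2 : 𝓞 K) ∣ α)
    (hall : ∀ β : 𝓞 K, ¬ (2 : 𝓞 K) ∣ β →
      ∃ x y z : 𝓞 K, ¬((2 : 𝓞 K) ∣ x ∧ (2 : 𝓞 K) ∣ y ∧ (2 : 𝓞 K) ∣ z) ∧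
        (8 : 𝓞 K) ∣ (x ^ 2 - α * y ^ 2 - β * z ^ 2)) :
    ∃ γ : 𝓞 K, ¬ (2 : 𝓞 K) ∣ γ ∧ (4 : 𝓞 K) ∣ (α - γ ^ 2) :=
  have := Ring.HasFiniteQuotients.finiteQuotient
    (by simp [hinert.ne_zero] : span {(2 : 𝓞 K)} ≠ ⊥)
  exists_odd_four_dvd_sub_sq_of_forall_exists_primitive_solution hinert hα hall
end
end

section
/- The set of classes c ∈ M₄ fixed by the induced action of every σ ∈ Gal(K/ℚ) is exactly {[1], [−1]}, and moreover [1] ≠ [−1] in M₄. -/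
open scoped Classical
open NumberField Filter

noncomputable section

open SpinPaper

/-! Write `O = 𝓞 K` and `N = #(O/2)`. Since `2` is inert, `O/2` is a finite field of characteristic
`2`, so `N - 1` is odd and every unit `u` of `O/4` satisfies `u ^ (N-1) ≡ 1 (mod 2)`; such elements
square to `1` in `O/4`. Hence the squares of `(O/4)ˣ` are exactly the kernel of `u ↦ u ^ (N-1)`,
and this Galois-equivariant map embeds `M₄` into the elements `1 + 2a` of `O/4`. A fixed `1 + 2a`
has `a` Galois-fixed mod `2`; as `[K:ℚ]` is odd, `a ≡ [K:ℚ]·a ≡ Tr a (mod 2)` is congruent to a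
rational integer, so `1 + 2a = ±1`. Finally `1 ≠ -1` in `O/4` because `2` is not a unit. -/

namespace SpinPaper

theorem range_powMonoidHom_two_eq_ker {G : Type*} [CommGroup G] {m : ℕ} (hm : Odd m)
    (hG : ∀ g : G, g ^ (2 * m) = 1) :
    (powMonoidHom 2 : G →* G).range = (powMonoidHom m : G →* G).ker := by
  ext g
  simp only [MonoidHom.mem_range, MonoidHom.mem_ker, powMonoidHom_apply]
  constructor
  · rintro ⟨h, rfl⟩
    rw [← pow_mul, hG]
  · intro hg
    obtain ⟨k, rfl⟩ := hm
    refine ⟨g ^ (k + 1), ?_⟩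
    calc (g ^ (k + 1)) ^ 2 = g ^ (2 * k + 1) * g := by rw [← pow_succ, ← pow_mul]; ring_nf
      _ = g := by rw [hg, one_mul]

theorem sq_eq_one_of_two_dvd_sub_one {S : Type*} [CommRing S] (h4 : (4 : S) = 0) {w : S}
    (hw : 2 ∣ w - 1) : w ^ 2 = 1 := by
  obtain ⟨a, ha⟩ := hw
  linear_combination (w + 1 + 2 * a) * ha + (a ^ 2 + a) * h4

variable {R : Type*} [CommRing R]

theorem dvd_pow_card_sub_one_sub_one {p : R} (hp : Prime p) [Finite (R ⧸ Ideal.span {p})]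
    {b : R} (hb : ¬ p ∣ b) : p ∣ b ^ (Nat.card (R ⧸ Ideal.span {p}) - 1) - 1 := by
  have : (Ideal.span {p}).IsPrime := (Ideal.span_singleton_prime hp.ne_zero).mpr hp
  let := Fintype.ofFinite (R ⧸ Ideal.span {p})
  let := Fintype.fieldOfDomain (R ⧸ Ideal.span {p})
  have hb0 : Ideal.Quotient.mk (Ideal.span {p}) b ≠ 0 := by
    rwa [Ne, Ideal.Quotient.eq_zero_iff_mem, Ideal.mem_span_singleton]
  rw [← Ideal.mem_span_singleton, ← Ideal.Quotient.eq_zero_iff_mem, map_sub, map_pow, map_one,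
    Nat.card_eq_fintype_card, FiniteField.pow_card_sub_one_eq_one _ hb0, sub_self]

theorem odd_card_quotient_span_two_sub_one (h2 : Prime (2 : R))
    [Finite (R ⧸ Ideal.span {(2 : R)})] : Odd (Nat.card (R ⧸ Ideal.span {(2 : R)}) - 1) := by
  have h1 : (1 : R ⧸ Ideal.span {(2 : R)}) ≠ 0 := by
    rw [← map_one (Ideal.Quotient.mk _), Ne, Ideal.Quotient.eq_zero_iff_mem,
      Ideal.mem_span_singleton]
    exact h2.not_dvd_one
  have h2' : (2 : R ⧸ Ideal.span {(2 : R)}) = 0 := by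
    rw [← map_ofNat (Ideal.Quotient.mk _), Ideal.Quotient.mk_singleton_self]
  have := CharTwo.of_one_ne_zero_of_two_eq_zero h1 h2'
  have := Fintype.ofFinite (R ⧸ Ideal.span {(2 : R)})
  have heven : Even (Nat.card (R ⧸ Ideal.span {(2 : R)})) := by
    rw [Nat.card_eq_fintype_card, even_iff_two_dvd,
      ← CharP.cast_eq_zero_iff (R ⧸ Ideal.span {(2 : R)}) 2]
    exact Nat.cast_card_eq_zero _
  exact Nat.Even.sub_odd Nat.card_pos heven odd_one

theorem four_eq_zero_quotient_span_four : (4 : R ⧸ Ideal.span {(4 : R)}) = 0 := by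
  rw [← map_ofNat (Ideal.Quotient.mk _), Ideal.Quotient.mk_singleton_self]

theorem one_ne_neg_one_units_quotient_span_four [IsDomain R] (h2 : Prime (2 : R)) :
    (1 : (R ⧸ Ideal.span {(4 : R)})ˣ) ≠ -1 := by
  intro h
  have h20 : Ideal.Quotient.mk (Ideal.span {(4 : R)}) 2 = 0 := by
    have h' : (1 : R ⧸ Ideal.span {(4 : R)}) = -1 := by simpa using congrArg Units.val h
    rw [map_ofNat]
    linear_combination h'
  rw [Ideal.Quotient.eq_zero_iff_mem, Ideal.mem_span_singleton,
    show (4 : R) = 2 * 2 by norm_num] at h20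
  exact h2.not_dvd_one ((mul_dvd_mul_iff_left h2.ne_zero).mp (by rwa [mul_one]))

theorem two_dvd_val_pow_card_sub_one_sub_one (h2 : Prime (2 : R))
    [Finite (R ⧸ Ideal.span {(2 : R)})] (u : (R ⧸ Ideal.span {(4 : R)})ˣ) :
    2 ∣ (u : R ⧸ Ideal.span {(4 : R)}) ^ (Nat.card (R ⧸ Ideal.span {(2 : R)}) - 1) - 1 := by
  obtain ⟨b, hb⟩ := Ideal.Quotient.mk_surjective (u : R ⧸ Ideal.span {(4 : R)})
  have hb2 : ¬ 2 ∣ b := by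
    rintro ⟨c, rfl⟩
    have h0 : IsUnit (0 : R ⧸ Ideal.span {(4 : R)}) := by
      convert (u ^ 2).isUnit
      rw [Units.val_pow_eq_pow_val, ← hb, ← map_pow, show (2 * c) ^ 2 = 4 * c ^ 2 by ring,
        map_mul, Ideal.Quotient.mk_singleton_self, zero_mul]
    rw [isUnit_zero_iff, eq_comm, ← map_one (Ideal.Quotient.mk _), Ideal.Quotient.eq_zero_iff_mem,
      Ideal.mem_span_singleton] at h0
    exact h2.not_dvd_one (dvd_trans ⟨2, by norm_num⟩ h0)
  have h := map_dvd (Ideal.Quotient.mk (Ideal.span {(4 : R)})) (dvd_pow_card_sub_one_sub_one h2 hb2)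
  rwa [map_ofNat, map_sub, map_pow, map_one, hb] at h

theorem range_powMonoidHom_two_eq_ker_units_quotient_span_four (h2 : Prime (2 : R))
    [Finite (R ⧸ Ideal.span {(2 : R)})] :
    (powMonoidHom 2 : (R ⧸ Ideal.span {(4 : R)})ˣ →* _).range =
      (powMonoidHom (Nat.card (R ⧸ Ideal.span {(2 : R)}) - 1)).ker := by
  refine range_powMonoidHom_two_eq_ker (odd_card_quotient_span_two_sub_one h2) fun u => ?_
  ext
  rw [mul_comm, pow_mul, Units.val_pow_eq_pow_val, Units.val_pow_eq_pow_val, Units.val_one]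
  exact sq_eq_one_of_two_dvd_sub_one four_eq_zero_quotient_span_four
    (two_dvd_val_pow_card_sub_one_sub_one h2 u)

theorem finite_quotient_span_of_prime {K : Type} [Field K] [NumberField K] {p : 𝓞 K}
    (hp : Prime p) : Finite (𝓞 K ⧸ Ideal.span {p}) :=
  have hP : (Ideal.span {p}).IsPrime := (Ideal.span_singleton_prime hp.ne_zero).mpr hp
  have := hP.isMaximal (by simpa using hp.ne_zero)
  inferInstance

theorem mk_eq_mk_iff_pow_card_sub_one_eq {K : Type} [Field K] (h2 : Prime (2 : 𝓞 K))
    [Finite (𝓞 K ⧸ Ideal.span {(2 : 𝓞 K)})] (u v : U4 K) :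
    (QuotientGroup.mk u : M4 K) = QuotientGroup.mk v ↔
      u ^ (Nat.card (𝓞 K ⧸ Ideal.span {(2 : 𝓞 K)}) - 1) =
        v ^ (Nat.card (𝓞 K ⧸ Ideal.span {(2 : 𝓞 K)}) - 1) := by
  rw [QuotientGroup.eq, sqSub, range_powMonoidHom_two_eq_ker_units_quotient_span_four h2,
    ← MonoidHom.eq_iff, powMonoidHom_apply, powMonoidHom_apply, eq_comm]

variable (K : Type) [Field K] [NumberField K]

def galQuot (σ : K ≃ₐ[ℚ] K) : 𝓞 K ⧸ I4 K →+* 𝓞 K ⧸ I4 K :=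
  Ideal.quotientMap (I4 K) (galMap K σ : 𝓞 K →+* 𝓞 K) <| Ideal.span_le.mpr <|
    Set.singleton_subset_iff.mpr <| by
      rw [SetLike.mem_coe, Ideal.mem_comap, map_ofNat]
      exact Ideal.mem_span_singleton_self 4

theorem galQuot_mk (σ : K ≃ₐ[ℚ] K) (a : 𝓞 K) :
    galQuot K σ (Ideal.Quotient.mk (I4 K) a) = Ideal.Quotient.mk (I4 K) (galMap K σ a) :=
  Ideal.quotientMap_mk

def galUnits (σ : K ≃ₐ[ℚ] K) : U4 K →* U4 K :=
  Units.map (galQuot K σ : 𝓞 K ⧸ I4 K →* 𝓞 K ⧸ I4 K)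

@[simp]
theorem val_galUnits (σ : K ≃ₐ[ℚ] K) (u : U4 K) :
    (galUnits K σ u : 𝓞 K ⧸ I4 K) = galQuot K σ u :=
  rfl

theorem sqSub_le_comap_galUnits (σ : K ≃ₐ[ℚ] K) : sqSub K ≤ (sqSub K).comap (galUnits K σ) := by
  rintro _ ⟨v, rfl⟩
  exact ⟨galUnits K σ v, (map_pow (galUnits K σ) v 2).symm⟩

theorem actRel_mk_iff (σ : K ≃ₐ[ℚ] K) (u : U4 K) (c : M4 K) :
    ActRel K σ (QuotientGroup.mk u) c ↔ QuotientGroup.mk (galUnits K σ u) = c := by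
  constructor
  · intro h
    obtain ⟨a, ha⟩ := Ideal.Quotient.mk_surjective (u : 𝓞 K ⧸ I4 K)
    obtain ⟨w, hw, rfl⟩ := h a ⟨u, ha.symm, rfl⟩
    congr 1
    ext
    rw [hw, val_galUnits, ← ha, galQuot_mk]
  · rintro rfl a ⟨w, hw, hwu⟩
    refine ⟨galUnits K σ w, by rw [val_galUnits, hw, galQuot_mk], ?_⟩
    have := congrArg (QuotientGroup.map _ _ _ (sqSub_le_comap_galUnits K σ)) hwu
    simpa only [QuotientGroup.map_mk] using this

theorem sum_galMap_eq_intTrace [IsGalois ℚ K] (a : 𝓞 K) :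
    ∑ σ : K ≃ₐ[ℚ] K, galMap K σ a = (Algebra.intTrace ℤ (𝓞 K) a : 𝓞 K) := by
  apply RingOfIntegers.coe_injective
  rw [map_sum, ← eq_intCast (algebraMap ℤ (𝓞 K)), ← IsScalarTower.algebraMap_apply,
    IsScalarTower.algebraMap_apply ℤ ℚ K, Algebra.algebraMap_intTrace (L := K),
    trace_eq_sum_automorphisms]
  exact Finset.sum_congr rfl fun σ _ => algebraMap_galRestrict_apply ℤ σ a

variable {K}

theorem exists_int_dvd_sub_of_forall_dvd_galMap_sub [IsGalois ℚ K] {d : ℤ}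
    (hd : IsCoprime (Module.finrank ℚ K : ℤ) d) {a : 𝓞 K}
    (ha : ∀ σ : K ≃ₐ[ℚ] K, (d : 𝓞 K) ∣ galMap K σ a - a) : ∃ z : ℤ, (d : 𝓞 K) ∣ a - z := by
  obtain ⟨u, v, huv⟩ := hd
  set t := Algebra.intTrace ℤ (𝓞 K) a
  have hsum : ∑ σ : K ≃ₐ[ℚ] K, (galMap K σ a - a) = t - Module.finrank ℚ K * a := by
    rw [Finset.sum_sub_distrib, sum_galMap_eq_intTrace, Finset.sum_const, Finset.card_univ,
      ← Nat.card_eq_fintype_card, IsGalois.card_aut_eq_finrank, nsmul_eq_mul]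
  have htr : (d : 𝓞 K) ∣ t - Module.finrank ℚ K * a := hsum ▸ Finset.dvd_sum fun σ _ => ha σ
  refine ⟨u * t, ?_⟩
  have huv' := congrArg (Int.cast : ℤ → 𝓞 K) huv
  push_cast at huv' ⊢
  have : a - u * t = -u * (t - Module.finrank ℚ K * a) + d * (v * a) := by
    linear_combination (-a) * huv'
  rw [this]
  exact dvd_add (dvd_mul_of_dvd_right htr _) (dvd_mul_right _ _)

theorem eq_one_or_eq_neg_one_of_forall_galUnits_eq [IsGalois ℚ K]
    (hodd : Odd (Module.finrank ℚ K)) {w : U4 K}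
    (hw : 2 ∣ (w : 𝓞 K ⧸ I4 K) - 1) (hfix : ∀ σ : K ≃ₐ[ℚ] K, galUnits K σ w = w) :
    w = 1 ∨ w = -1 := by
  obtain ⟨α, hα⟩ := hw
  obtain ⟨a, rfl⟩ := Ideal.Quotient.mk_surjective α
  have hwa : (w : 𝓞 K ⧸ I4 K) = Ideal.Quotient.mk (I4 K) (2 * a + 1) := by
    rw [map_add, map_mul, map_ofNat, map_one, ← hα, sub_add_cancel]
  have ha : ∀ σ : K ≃ₐ[ℚ] K, ((2 : ℤ) : 𝓞 K) ∣ galMap K σ a - a := by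
    intro σ
    have h := congrArg Units.val (hfix σ)
    rw [val_galUnits, hwa, galQuot_mk, Ideal.Quotient.eq, Ideal.mem_span_singleton, map_add,
      map_mul, map_ofNat, map_one, show (4 : 𝓞 K) = 2 * 2 by norm_num,
      show 2 * galMap K σ a + 1 - (2 * a + 1) = 2 * (galMap K σ a - a) by ring,
      mul_dvd_mul_iff_left two_ne_zero] at h
    exact_mod_cast h
  have hcop : IsCoprime (Module.finrank ℚ K : ℤ) 2 := by
    obtain ⟨m, hm⟩ := hodd
    exact ⟨1, -m, by rw [hm]; push_cast; ring⟩
  obtain ⟨z, c, hc⟩ := exists_int_dvd_sub_of_forall_dvd_galMap_sub hcop ha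
  have h4 : (4 : 𝓞 K ⧸ I4 K) = 0 := four_eq_zero_quotient_span_four
  have hc' := congrArg (Ideal.Quotient.mk (I4 K)) hc
  simp only [map_sub, map_mul, map_intCast, Int.cast_ofNat, map_ofNat] at hc'
  rcases Int.even_or_odd' z with ⟨k, rfl | rfl⟩
  · left
    ext
    push_cast at hc' ⊢
    linear_combination hα + 2 * hc' + (Ideal.Quotient.mk (I4 K) c + k) * h4
  · right
    ext
    push_cast at hc' ⊢
    linear_combination hα + 2 * hc' + (Ideal.Quotient.mk (I4 K) c + k + 1) * h4

end SpinPaper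

theorem M4_galois_invariants_general
    (K : Type) [Field K] [NumberField K] [IsGalois ℚ K]
    (n : ℕ) (hn : Module.finrank ℚ K = n)
    (hnodd : Odd n)
    (hinert : Prime (2 : 𝓞 K)) :
    {c : M4 K | ∀ σ : K ≃ₐ[ℚ] K, ActRel K σ c c} =
      {(QuotientGroup.mk (1 : U4 K) : M4 K), (QuotientGroup.mk (-1 : U4 K) : M4 K)} ∧
    (QuotientGroup.mk (1 : U4 K) : M4 K) ≠ (QuotientGroup.mk (-1 : U4 K) : M4 K) := by
  have := finite_quotient_span_of_prime hinert
  have hmk := mk_eq_mk_iff_pow_card_sub_one_eq hinert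
  have hq := odd_card_quotient_span_two_sub_one hinert
  refine ⟨Set.ext fun c => ?_, ?_⟩
  · obtain ⟨u, rfl⟩ := QuotientGroup.mk_surjective c
    simp only [Set.mem_ofPred_eq, Set.mem_insert_iff, Set.mem_singleton_iff, actRel_mk_iff, hmk,
      one_pow, hq.neg_one_pow, ← map_pow]
    constructor
    · exact eq_one_or_eq_neg_one_of_forall_galUnits_eq (hn ▸ hnodd)
        (two_dvd_val_pow_card_sub_one_sub_one hinert u)
    · rintro (h | h) σ <;> ext <;> simp [h, map_neg]
  · rw [Ne, hmk, one_pow, hq.neg_one_pow]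
    exact one_ne_neg_one_units_quotient_span_four hinert

set_option synthInstance.maxHeartbeats 1000000 in
/-- The classes of `M₄` fixed by the induced Galois action are exactly `[1]` and `[-1]`,
and these two classes are distinct. -/
theorem M4_galois_invariants
    (K : Type) [Field K] [NumberField K] [IsGalois ℚ K]
    (n : ℕ) (hn : Module.finrank ℚ K = n)
    (hcyc : IsCyclic (K ≃ₐ[ℚ] K))
    (hnodd : Odd n)
    (hinert : Prime (2 : 𝓞 K)) :
    {c : M4 K | ∀ σ : K ≃ₐ[ℚ] K, ActRel K σ c c} =
      {(QuotientGroup.mk (1 : U4 K) : M4 K), (QuotientGroup.mk (-1 : U4 K) : M4 K)} ∧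
    (QuotientGroup.mk (1 : U4 K) : M4 K) ≠ (QuotientGroup.mk (-1 : U4 K) : M4 K) :=
  M4_galois_invariants_general K n hn hnodd hinert
end
end

section
/- If α, β ∈ O are coprime to 2 and there exists γ ∈ O with α ≡ β·γ² (mod 4O), then N_{K/ℚ}(α) ≡ N_{K/ℚ}(β) (mod 4). Consequently the map N : M₄ → (ℤ/4ℤ)^× sending the class [α] to N_{K/ℚ}(α) mod 4 is well-defined, and it satisfies N([σ(α)]) = N([α]) for every σ ∈ Gal(K/ℚ). -/
/-! The norm `N : 𝓞 K → ℤ` is the determinant of the multiplication matrix, so it respects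
congruences: `α ≡ α' (mod m 𝓞 K)` gives `N α ≡ N α' (mod m)`. Hence `α ≡ β γ² (mod 4)` gives
`N α ≡ N β · (N γ)² (mod 4)`. When `2` is prime, `2 𝓞 K` is a nonzero prime of a Dedekind domain,
hence maximal, so a `γ` prime to `2` is invertible modulo `2`; then `N γ` is invertible modulo `2`,
i.e. odd, and `(N γ)² ≡ 1 (mod 4)`. Galois invariance is invariance of the norm under algebra
automorphisms. -/

open scoped Classical
open NumberField Filter

noncomputable section

namespace Algebra

variable {R S : Type*} [CommRing R] [CommRing S] [Algebra R S] [Module.Free R S]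
  [Module.Finite R S]

theorem map_norm_eq_of_dvd_sub {T : Type*} [CommRing T] (f : R →+* T) {c : R} (hc : f c = 0)
    {a b : S} (h : algebraMap R S c ∣ a - b) : f (norm R a) = f (norm R b) := by
  obtain ⟨d, hd⟩ := h
  let bs := Module.Free.chooseBasis R S
  have hab : leftMulMatrix bs a = leftMulMatrix bs b + c • leftMulMatrix bs d := by
    rw [← map_smul, ← map_add, Algebra.smul_def, ← hd, add_sub_cancel]
  have hmap : f.mapMatrix (leftMulMatrix bs a) = f.mapMatrix (leftMulMatrix bs b) := by
    ext i j
    simp [hab, hc]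
  rw [norm_eq_matrix_det bs, norm_eq_matrix_det bs, RingHom.map_det, RingHom.map_det, hmap]

section Int

variable {S : Type*} [CommRing S] [Module.Free ℤ S] [Module.Finite ℤ S]

theorem intCast_norm_eq_of_dvd_sub {m : ℕ} {a b : S} (h : (m : S) ∣ a - b) :
    ((Algebra.norm ℤ a : ℤ) : ZMod m) = Algebra.norm ℤ b :=
  map_norm_eq_of_dvd_sub (Int.castRingHom (ZMod m)) (c := m) (by simp) (by simpa using h)

theorem odd_norm_of_dvd_mul_sub_one {γ δ : S} (h : (2 : S) ∣ γ * δ - 1) :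
    Odd (Algebra.norm ℤ γ) := by
  have h2 : (2 : S) = ((2 : ℕ) : S) := by norm_num
  have hunit := intCast_norm_eq_of_dvd_sub (h2 ▸ h)
  rw [map_mul, map_one, Int.cast_mul, Int.cast_one] at hunit
  rw [← Int.not_even_iff_odd, ← ZMod.intCast_eq_zero_iff_even]
  exact left_ne_zero_of_mul_eq_one hunit

theorem intCast_norm_eq_of_dvd_sub_mul_sq {α β γ δ : S}
    (h : (4 : S) ∣ α - β * γ ^ 2) (hγ : (2 : S) ∣ γ * δ - 1) :
    ((Algebra.norm ℤ α : ℤ) : ZMod 4) = Algebra.norm ℤ β := by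
  have hsq : ((Algebra.norm ℤ γ ^ 2 : ℤ) : ZMod 4) = 1 := by
    rw [← ZMod.intCast_mod, Nat.cast_ofNat,
      Int.sq_mod_four_eq_one_of_odd (odd_norm_of_dvd_mul_sub_one hγ), Int.cast_one]
  have h4 : (4 : S) = ((4 : ℕ) : S) := by norm_num
  rw [intCast_norm_eq_of_dvd_sub (h4 ▸ h), map_mul, map_pow, Int.cast_mul, hsq, mul_one]

end Int

end Algebra

theorem exists_dvd_mul_sub_one_of_prime {R : Type*} [CommRing R] [Ring.DimensionLEOne R]
    {p γ : R} (hp : Prime p) (hγ : ¬ p ∣ γ) : ∃ δ, p ∣ γ * δ - 1 := by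
  have hmax : (Ideal.span {p}).IsMaximal :=
    ((Ideal.span_singleton_prime hp.ne_zero).mpr hp).isMaximal (by simpa using hp.ne_zero)
  obtain ⟨δ, i, hi, hδ⟩ := hmax.exists_inv (by rwa [Ideal.mem_span_singleton])
  refine ⟨δ, ?_⟩
  rw [← Ideal.mem_span_singleton, show γ * δ - 1 = -i by linear_combination hδ]
  exact neg_mem hi

namespace SpinPaper

variable {K : Type} [Field K]

theorem Represents.exists_dvd_sub_mul_sq {α β : 𝓞 K} {c : M4 K} (hα : Represents K α c)
    (hβ : Represents K β c) : ∃ γ δ : 𝓞 K, (4 : 𝓞 K) ∣ β - α * γ ^ 2 ∧ (4 : 𝓞 K) ∣ γ * δ - 1 := by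
  obtain ⟨u, hu, rfl⟩ := hα
  obtain ⟨v, hv, huv⟩ := hβ
  obtain ⟨w, hw⟩ : u⁻¹ * v ∈ sqSub K := QuotientGroup.eq.mp huv.symm
  obtain ⟨γ, hγ⟩ := Ideal.Quotient.mk_surjective (w : 𝓞 K ⧸ I4 K)
  obtain ⟨δ, hδ⟩ := Ideal.Quotient.mk_surjective (↑w⁻¹ : 𝓞 K ⧸ I4 K)
  have hv' : v = u * w ^ 2 := by rw [show w ^ 2 = u⁻¹ * v from hw]; group
  refine ⟨γ, δ, ?_, ?_⟩ <;>
  · simp only [← Ideal.mem_span_singleton, ← Ideal.Quotient.eq_zero_iff_mem, map_sub, map_mul,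
      map_pow, map_one, hγ, hδ, ← hu, ← hv]
    simp [hv']

end SpinPaper

open SpinPaper

theorem norm_well_defined_on_M4_general
    (K : Type) [Field K] [NumberField K]
    (hinert : Prime (2 : 𝓞 K)) :
    (∀ α β : 𝓞 K, ¬ (2 : 𝓞 K) ∣ α → ¬ (2 : 𝓞 K) ∣ β →
      (∃ γ : 𝓞 K, (4 : 𝓞 K) ∣ (α - β * γ ^ 2)) →
      ((Algebra.norm ℤ α : ℤ) : ZMod 4) = ((Algebra.norm ℤ β : ℤ) : ZMod 4)) ∧
    (∀ c : M4 K, ∀ α β : 𝓞 K, Represents K α c → Represents K β c →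
      ((Algebra.norm ℤ α : ℤ) : ZMod 4) = ((Algebra.norm ℤ β : ℤ) : ZMod 4)) ∧
    (∀ σ : K ≃ₐ[ℚ] K, ∀ α : 𝓞 K, ¬ (2 : 𝓞 K) ∣ α →
      ((Algebra.norm ℤ (galMap K σ α) : ℤ) : ZMod 4) = ((Algebra.norm ℤ α : ℤ) : ZMod 4)) := by
  have two_dvd_four : (2 : 𝓞 K) ∣ 4 := ⟨2, by norm_num⟩
  refine ⟨?_, ?_, fun σ α _ => by rw [Algebra.norm_eq_of_algEquiv]⟩
  · rintro α β hα - ⟨γ, h⟩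
    have hγ : ¬ (2 : 𝓞 K) ∣ γ := fun h2 => hα <| by
      simpa using dvd_add (two_dvd_four.trans h) ((dvd_pow h2 two_ne_zero).mul_left β)
    obtain ⟨δ, hγδ⟩ := exists_dvd_mul_sub_one_of_prime hinert hγ
    exact Algebra.intCast_norm_eq_of_dvd_sub_mul_sq h hγδ
  · rintro c α β hα hβ
    obtain ⟨γ, δ, h, hγδ⟩ := hα.exists_dvd_sub_mul_sq hβ
    exact (Algebra.intCast_norm_eq_of_dvd_sub_mul_sq h (two_dvd_four.trans hγδ)).symm

/-- The norm map is well-defined on `M₄` and Galois invariant: if `α ≡ β γ² (mod 4)`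
then `N(α) ≡ N(β) (mod 4)`; consequently representatives of a common class of `M₄`
have the same norm mod `4`, and the norm of a class is Galois invariant. -/
theorem norm_well_defined_on_M4
    (K : Type) [Field K] [NumberField K] [IsGalois ℚ K]
    (n : ℕ) (hn : Module.finrank ℚ K = n)
    (hcyc : IsCyclic (K ≃ₐ[ℚ] K))
    (hnodd : Odd n)
    (hinert : Prime (2 : 𝓞 K)) :
    (∀ α β : 𝓞 K, ¬ (2 : 𝓞 K) ∣ α → ¬ (2 : 𝓞 K) ∣ β →
      (∃ γ : 𝓞 K, (4 : 𝓞 K) ∣ (α - β * γ ^ 2)) →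
      ((Algebra.norm ℤ α : ℤ) : ZMod 4) = ((Algebra.norm ℤ β : ℤ) : ZMod 4)) ∧
    (∀ c : M4 K, ∀ α β : 𝓞 K, Represents K α c → Represents K β c →
      ((Algebra.norm ℤ α : ℤ) : ZMod 4) = ((Algebra.norm ℤ β : ℤ) : ZMod 4)) ∧
    (∀ σ : K ≃ₐ[ℚ] K, ∀ α : 𝓞 K, ¬ (2 : 𝓞 K) ∣ α →
      ((Algebra.norm ℤ (galMap K σ α) : ℤ) : ZMod 4) = ((Algebra.norm ℤ α : ℤ) : ZMod 4)) :=
  norm_well_defined_on_M4_general K hinert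
end
end

section
/- K is totally real and every nonzero principal ideal of O has a totally positive generator if and only if every totally positive unit of O is the square of a unit, i.e. O^×₊ = (O^×)². -/
open scoped Classical
open NumberField Filter

noncomputable section

open SpinPaper

/-!
Let `s : (𝓞 K)ˣ → {±1}^{r₁}` record the signs of a unit at the `r₁` real embeddings. Its kernel
is the group of totally positive units and contains the squares, while by Dirichlet's unit
theorem the squares have index `2 ^ (r₁ + r₂)` (the torsion is cyclic of even order). Comparing
`2 ^ (r₁ + r₂)` with the `2 ^ r₁` sign vectors: `s` has kernel exactly the squares iff
`r₂ = 0` and `s` is surjective. Finally `s` is surjective iff every nonzero `α` has a totally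
positive associate, because by weak approximation every sign vector is realised by some
nonzero `α ∈ 𝓞 K`.
-/

namespace Subgroup

section Counting

variable {G H : Type*} [Group G] [Group H] [Finite H] {f : G →* H} {N : Subgroup G}

theorem index_le_card_of_ker_le (h : f.ker ≤ N) : N.index ≤ Nat.card H :=
  calc N.index ≤ f.ker.index :=
        Nat.le_of_dvd (by rw [index_ker]; exact Nat.card_pos) (index_dvd_of_le h)
    _ = Nat.card f.range := index_ker f
    _ ≤ Nat.card H := card_le_card_group _

theorem ker_le_iff_surjective (hN : N ≤ f.ker) (hcard : N.index = Nat.card H) :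
    f.ker ≤ N ↔ Function.Surjective f := by
  rw [← MonoidHom.range_eq_top, ← card_eq_iff_eq_top, ← index_ker, ← hcard]
  refine ⟨fun h ↦ by rw [le_antisymm h hN], fun h ↦ relIndex_eq_one.mp ?_⟩
  have hpos : N.index ≠ 0 := by rw [hcard]; exact Nat.card_pos.ne'
  have hmul := relIndex_mul_index hN
  rw [h] at hmul
  exact (Nat.mul_eq_right hpos).mp hmul

end Counting

open Module

theorem index_range_powMonoidHom {Q : Type*} [CommGroup Q] [Free ℤ (Additive Q)]
    [Module.Finite ℤ (Additive Q)] (n : ℕ) :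
    (powMonoidHom n : Q →* Q).range.index = n ^ finrank ℤ (Additive Q) := by
  rw [← index_toAddSubgroup]
  exact AddSubgroup.index_range_nsmul (Additive Q) n

theorem index_range_powMonoidHom_of_pow_mem {G : Type*} [CommGroup G] (T : Subgroup G)
    [IsCyclic T] [Finite T] [Free ℤ (Additive (G ⧸ T))] [Module.Finite ℤ (Additive (G ⧸ T))]
    {n : ℕ} (hT : ∀ g : G, g ^ n ∈ T → g ∈ T) :
    (powMonoidHom n : G →* G).range.index =
      (Nat.card T).gcd n * n ^ finrank ℤ (Additive (G ⧸ T)) := by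
  set S := (powMonoidHom n : G →* G).range
  have hST : S.subgroupOf T = (powMonoidHom n : T →* T).range := by
    ext ⟨x, hx⟩
    simp only [mem_subgroupOf, MonoidHom.mem_range, powMonoidHom_apply]
    constructor
    · rintro ⟨g, rfl⟩
      exact ⟨⟨g, hT g hx⟩, rfl⟩
    · rintro ⟨⟨g, _⟩, h⟩
      exact ⟨g, congrArg Subtype.val h⟩
  have hrel : S.relIndex (S ⊔ T) = (Nat.card T).gcd n := by
    rw [relIndex_sup_left, relIndex, hST, IsCyclic.index_powMonoidHom_range]
  have hsup : (S ⊔ T).index = n ^ finrank ℤ (Additive (G ⧸ T)) := by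
    have hmap := index_map S (QuotientGroup.mk' T)
    rw [QuotientGroup.ker_mk', (QuotientGroup.mk' T).range_eq_top_of_surjective
      (QuotientGroup.mk'_surjective _), index_top, mul_one] at hmap
    have hcomm : (QuotientGroup.mk' T).comp (powMonoidHom n) =
        (powMonoidHom n).comp (QuotientGroup.mk' T) := rfl
    rw [← hmap, ← index_range_powMonoidHom n, MonoidHom.map_range, hcomm, MonoidHom.range_comp,
      (QuotientGroup.mk' T).range_eq_top_of_surjective (QuotientGroup.mk'_surjective _),
      ← MonoidHom.range_eq_map]
  rw [← relIndex_mul_index le_sup_left, hrel, hsup]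

end Subgroup

theorem SignType.sign_eq_of_abs_sub_lt_one {α : Type*} [CommRing α] [LinearOrder α]
    [IsStrictOrderedRing α] {t : SignType} (ht : t ≠ 0) {a : α} (h : |a - t| < 1) :
    SignType.sign a = t := by
  rw [abs_lt] at h
  rcases t with _ | _ | _
  · exact absurd rfl ht
  · simp only [SignType.neg_eq_neg_one, SignType.coe_neg_one] at h ⊢
    exact sign_neg (by linarith [h.2])
  · simp only [SignType.pos_eq_one, SignType.coe_one] at h ⊢
    exact sign_pos (by linarith [h.1])

theorem NumberField.ComplexEmbedding.isReal_ofRealHom_comp {K : Type*} [Field K] (φ : K →+* ℝ) :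
    IsReal (Complex.ofRealHom.comp φ) := by
  rw [isReal_iff]
  ext x
  simp [conjugate_coe_eq]

namespace NumberField.InfinitePlace

variable (K : Type*) [Field K]

def realEmbeddingEquiv : (K →+* ℝ) ≃ {w : InfinitePlace K // w.IsReal} where
  toFun φ := ⟨mk (Complex.ofRealHom.comp φ),
    isReal_mk_iff.mpr (ComplexEmbedding.isReal_ofRealHom_comp φ)⟩
  invFun w := embedding_of_isReal w.2
  left_inv φ := by
    ext x
    apply Complex.ofReal_injective
    simp [embedding_mk_eq_of_isReal (ComplexEmbedding.isReal_ofRealHom_comp φ)]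
  right_inv w := by
    have : Complex.ofRealHom.comp (embedding_of_isReal w.2) = embedding w.1 := by
      ext x
      simp
    exact Subtype.ext (by simp only [this, mk_embedding])

theorem apply_realEmbeddingEquiv (φ : K →+* ℝ) (x : K) :
    (realEmbeddingEquiv K φ : InfinitePlace K) x = |φ x| := by
  simp [realEmbeddingEquiv, apply]

theorem exists_forall_abs_sub_lt [NumberField K] (y : (K →+* ℝ) → K) {δ : ℝ} (hδ : 0 < δ) :
    ∃ x : K, ∀ φ : K →+* ℝ, |φ x - φ (y φ)| < δ := by
  let z : (v : InfinitePlace K) → WithAbs v.1 := fun v ↦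
    WithAbs.toAbs v.1 (if hv : v.IsReal then y ((realEmbeddingEquiv K).symm ⟨v, hv⟩) else 0)
  obtain ⟨x, hx⟩ := (denseRange_algebraMap_pi K).exists_dist_lt z hδ
  refine ⟨x, fun φ ↦ ?_⟩
  have hz : z (realEmbeddingEquiv K φ) = WithAbs.toAbs _ (y φ) := by
    simp only [z, dif_pos (realEmbeddingEquiv K φ).2, Subtype.coe_eta, Equiv.symm_apply_apply]
  calc |φ x - φ (y φ)| = (realEmbeddingEquiv K φ : InfinitePlace K) (x - y φ) := by
        rw [apply_realEmbeddingEquiv, map_sub]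
    _ = dist (z (realEmbeddingEquiv K φ))
          (algebraMap K ((v : InfinitePlace K) → WithAbs v.1) x (realEmbeddingEquiv K φ)) := by
        rw [hz, dist_comm, dist_eq_norm]
        rfl
    _ < δ := (dist_pi_lt_iff hδ).mp hx _

end NumberField.InfinitePlace

namespace SpinPaper

section Ring

variable (R : Type*) [Ring R]

def realSigns : Rˣ →* (R →+* ℝ) → SignTypeˣ :=
  MonoidHom.pi fun φ ↦ Units.map (signHom.toMonoidHom.comp (φ : R →* ℝ))

variable {R}

theorem realSigns_eq_one_iff (x : Rˣ) : realSigns R x = 1 ↔ ∀ φ : R →+* ℝ, 0 < φ x := by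
  refine funext_iff.trans (forall_congr' fun φ ↦ ?_)
  simp [realSigns, Units.ext_iff, sign_eq_one_iff]

theorem realSigns_sq (x : Rˣ) : realSigns R (x ^ 2) = 1 := by
  rw [realSigns_eq_one_iff]
  intro φ
  rw [Units.val_pow_eq_pow_val, map_pow]
  exact pow_two_pos_of_ne_zero (Units.map (φ : R →* ℝ) x).ne_zero

end Ring

section UnitSigns

variable (K : Type) [Field K]

def unitsSigns : (𝓞 K)ˣ →* (K →+* ℝ) → SignTypeˣ :=
  (realSigns K).comp (Units.map (algebraMap (𝓞 K) K))

variable {K}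

theorem unitsSigns_eq_one_iff (u : (𝓞 K)ˣ) : unitsSigns K u = 1 ↔ TotPos K u :=
  realSigns_eq_one_iff _

theorem totPos_mul_unit_iff (α : 𝓞 K) (hα : (α : K) ≠ 0) (u : (𝓞 K)ˣ) :
    TotPos K (α * u) ↔ realSigns K (Units.mk0 _ hα) * unitsSigns K u = 1 := by
  rw [unitsSigns, MonoidHom.comp_apply, ← map_mul, realSigns_eq_one_iff]
  simp [TotPos]

variable (K)

theorem range_pow_two_le_ker_unitsSigns : (powMonoidHom 2).range ≤ (unitsSigns K).ker := by
  rintro _ ⟨v, rfl⟩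
  show realSigns K (Units.map _ (v ^ 2)) = 1
  rw [map_pow]
  exact realSigns_sq _

theorem forall_totPos_eq_sq_iff_ker_le :
    (∀ u : (𝓞 K)ˣ, TotPos K (u : 𝓞 K) → ∃ v : (𝓞 K)ˣ, u = v ^ 2) ↔
      (unitsSigns K).ker ≤ (powMonoidHom 2).range := by
  simp only [SetLike.le_def, MonoidHom.mem_ker, unitsSigns_eq_one_iff, MonoidHom.mem_range,
    powMonoidHom_apply]
  exact forall_congr' fun u ↦ imp_congr_right fun _ ↦ exists_congr fun v ↦ eq_comm

end UnitSigns

variable (K : Type) [Field K] [NumberField K]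

theorem realSigns_surjective : Function.Surjective (realSigns K) := by
  intro s
  obtain ⟨x, hx⟩ :=
    InfinitePlace.exists_forall_abs_sub_lt K (fun φ ↦ ((s φ : SignType) : K)) one_pos
  have hsign : ∀ φ : K →+* ℝ, SignType.sign (φ x) = s φ := fun φ ↦
    SignType.sign_eq_of_abs_sub_lt_one (s φ).ne_zero (by simpa [SignType.map_cast] using hx φ)
  by_cases hx0 : x = 0
  · exact ⟨1, funext fun φ ↦ absurd (hsign φ) (by simpa [hx0] using (s φ).ne_zero.symm)⟩
  exact ⟨Units.mk0 x hx0, funext fun φ ↦ Units.ext (hsign φ)⟩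

theorem exists_integral_realSigns_eq (s : (K →+* ℝ) → SignTypeˣ) :
    ∃ (α : 𝓞 K) (hα : (α : K) ≠ 0), realSigns K (Units.mk0 _ hα) = s := by
  obtain ⟨x, rfl⟩ := realSigns_surjective K s
  obtain ⟨a, b, hb, hab⟩ := IsFractionRing.div_surjective (A := 𝓞 K) (x : K)
  have hb0 : (b : K) ≠ 0 := RingOfIntegers.coe_ne_zero_iff.mpr (nonZeroDivisors.ne_zero hb)
  have hab' : ((a * b : 𝓞 K) : K) = x * (b : K) ^ 2 := by
    rw [← hab]
    push_cast
    field_simp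
  have hα : ((a * b : 𝓞 K) : K) ≠ 0 := by
    rw [hab']
    exact mul_ne_zero x.ne_zero (pow_ne_zero 2 hb0)
  refine ⟨a * b, hα, ?_⟩
  have hunit : Units.mk0 _ hα = x * Units.mk0 _ hb0 ^ 2 := by
    ext
    simpa using hab'
  rw [hunit, map_mul, realSigns_sq]
  exact mul_one _

theorem narrow_iff_surjective_unitsSigns :
    (∀ α : 𝓞 K, α ≠ 0 → ∃ β : 𝓞 K, TotPos K β ∧ Ideal.span {α} = Ideal.span {β}) ↔
      Function.Surjective (unitsSigns K) := by
  simp_rw [Ideal.span_singleton_eq_span_singleton, Associated]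
  constructor
  · intro h s
    obtain ⟨α, hα, hs⟩ := exists_integral_realSigns_eq K s⁻¹
    obtain ⟨_, hβ, u, rfl⟩ := h α (RingOfIntegers.coe_ne_zero_iff.mp hα)
    refine ⟨u, ?_⟩
    rw [← inv_inv s, ← hs, eq_inv_iff_mul_eq_one, mul_comm, ← totPos_mul_unit_iff]
    exact hβ
  · intro h α hα
    have hα' : (α : K) ≠ 0 := RingOfIntegers.coe_ne_zero_iff.mpr hα
    obtain ⟨u, hu⟩ := h (realSigns K (Units.mk0 _ hα'))⁻¹
    exact ⟨α * u, (totPos_mul_unit_iff α hα' u).mpr (by rw [hu, mul_inv_cancel]), u, rfl⟩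

theorem card_realEmbeddings_fun_signTypeUnits :
    Nat.card ((K →+* ℝ) → SignTypeˣ) = 2 ^ InfinitePlace.nrRealPlaces K := by
  rw [Nat.card_fun, Nat.card_eq_fintype_card (α := SignTypeˣ),
    show Fintype.card SignTypeˣ = 2 from rfl,
    Nat.card_congr (InfinitePlace.realEmbeddingEquiv K), Nat.card_eq_fintype_card]

theorem index_range_pow_two_units :
    (powMonoidHom 2 : (𝓞 K)ˣ →* (𝓞 K)ˣ).range.index =
      2 ^ (InfinitePlace.nrRealPlaces K + InfinitePlace.nrComplexPlaces K) := by
  have hsqrt_torsion (g : (𝓞 K)ˣ) (hg : g ^ 2 ∈ Units.torsion K) : g ∈ Units.torsion K :=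
    (CommGroup.mem_torsion g).mpr (((CommGroup.mem_torsion _).mp hg).of_pow two_ne_zero)
  have htorsion : (Nat.card (Units.torsion K)).gcd 2 = 2 :=
    Nat.gcd_eq_right (even_iff_two_dvd.mp (Units.even_torsionOrder K))
  rw [Subgroup.index_range_powMonoidHom_of_pow_mem (Units.torsion K) hsqrt_torsion, htorsion,
    Units.finrank_modTorsion, ← pow_succ', Units.rank, Nat.sub_add_cancel Fintype.card_pos,
    InfinitePlace.card_eq_nrRealPlaces_add_nrComplexPlaces]

theorem forall_im_eq_zero_iff_nrComplexPlaces_eq_zero :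
    (∀ φ : K →+* ℂ, ∀ x : K, (φ x).im = 0) ↔ InfinitePlace.nrComplexPlaces K = 0 := by
  rw [nrComplexPlaces_eq_zero_iff, isTotallyReal_iff]
  have hreal : ∀ φ : K →+* ℂ, ComplexEmbedding.IsReal φ ↔ ∀ x, (φ x).im = 0 := fun φ ↦ by
    simp [ComplexEmbedding.isReal_iff, RingHom.ext_iff, ComplexEmbedding.conjugate_coe_eq,
      Complex.conj_eq_iff_im]
  simp_rw [← hreal]
  exact ⟨fun h v ↦ InfinitePlace.mk_embedding v ▸ InfinitePlace.isReal_mk_iff.mpr (h _),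
    fun h φ ↦ InfinitePlace.isReal_mk_iff.mp (h _)⟩

end SpinPaper

/-- `K` is totally real and every nonzero principal ideal of `𝓞 K` has a totally
positive generator if and only if every totally positive unit is the square of a unit. -/
theorem totally_real_narrow_iff_units
    (K : Type) [Field K] [NumberField K] :
    ((∀ φ : K →+* ℂ, ∀ x : K, (φ x).im = 0) ∧
      ∀ α : 𝓞 K, α ≠ 0 → ∃ β : 𝓞 K, TotPos K β ∧ Ideal.span {α} = Ideal.span {β}) ↔
    (∀ u : (𝓞 K)ˣ, TotPos K (u : 𝓞 K) → ∃ v : (𝓞 K)ˣ, u = v ^ 2) := by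
  rw [forall_im_eq_zero_iff_nrComplexPlaces_eq_zero, narrow_iff_surjective_unitsSigns,
    forall_totPos_eq_sq_iff_ker_le]
  have hsq := range_pow_two_le_ker_unitsSigns K
  have hindex := index_range_pow_two_units K
  have hcard := card_realEmbeddings_fun_signTypeUnits K
  have hindex_eq_card (h : InfinitePlace.nrComplexPlaces K = 0) :
      (powMonoidHom 2 : (𝓞 K)ˣ →* (𝓞 K)ˣ).range.index = Nat.card ((K →+* ℝ) → SignTypeˣ) := by
    rw [hindex, hcard, h, add_zero]
  constructor
  · rintro ⟨hcomplex, hsurj⟩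
    exact (Subgroup.ker_le_iff_surjective hsq (hindex_eq_card hcomplex)).mpr hsurj
  · intro hker
    have hle := Subgroup.index_le_card_of_ker_le hker
    rw [hindex, hcard, Nat.pow_le_pow_iff_right one_lt_two] at hle
    have hcomplex : InfinitePlace.nrComplexPlaces K = 0 := by omega
    exact ⟨hcomplex, (Subgroup.ker_le_iff_surjective hsq (hindex_eq_card hcomplex)).mp hker⟩
end
end
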